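/- arXiv:2108.04662 — 2 statements merged into one kernel-verified Lean document; each statement's English description precedes it below -/
import Mathlib

section
/- There exists a unique set I of prime numbers such that the set of all primes is the union of I and P_I = {p_n : n ∈ I}, and I ∩ P_I = ∅. (That is, the primes admit a unique partition into an index set I and its indexed set P_I.) -/
/-- `nthPrime n` is the `n`-th prime number, 1-indexed: `nthPrime 1 = 2`, `nthPrime 2 = 3`, ... -/
noncomputable def nthPrime (n : ℕ) : ℕ := Nat.nth Nat.Prime (n - 1)

/-- For a set `S` of positive integers, `indexedSet S = {p_n : n ∈ S}`. -/
def indexedSet (S : Set ℕ) : Set ℕ := {m | ∃ n ∈ S, m = nthPrime n}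

/-- The higher-order prime sets: `P 1` is the set of all primes, and `P (k+1) = indexedSet (P k)`
for `k ≥ 1`.  (`P 0` is a junk value.) -/
def P : ℕ → Set ℕ
  | 0 => ∅
  | 1 => {p | p.Prime}
  | (k + 2) => indexedSet (P (k + 1))

lemma nth_ge (k : ℕ) : k + 2 ≤ Nat.nth Nat.Prime k := by
  induction k with
  | zero =>
    have := Nat.nth_count (p := Nat.Prime) Nat.prime_two
    rw [show Nat.count Nat.Prime 2 = 0 from by decide] at this
    omega
  | succ k ih =>
    have := (Nat.nth_lt_nth (p := Nat.Prime) Nat.infinite_setOf_prime (k := k) (n := k+1)).2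
      (by omega)
    omega

lemma lt_nthPrime (n : ℕ) (hn : 1 ≤ n) : n < nthPrime n := by
  have := nth_ge (n - 1)
  unfold nthPrime; omega

lemma nthPrime_prime (n : ℕ) : (nthPrime n).Prime :=
  Nat.nth_mem_of_infinite Nat.infinite_setOf_prime (n - 1)

/-- The canonical index set, defined by strong recursion. -/
def inI (q : ℕ) : Prop :=
  Nat.Prime q ∧ ∀ n < q, inI n → q ≠ nthPrime n
termination_by q

lemma inI_iff (q : ℕ) : inI q ↔ (Nat.Prime q ∧ ∀ n < q, inI n → q ≠ nthPrime n) := by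
  rw [inI]

/-- There exists a unique set `I` of prime numbers such that the set of all primes is the
union of `I` and `P_I = {p_n : n ∈ I}`, with `I ∩ P_I = ∅`. -/
theorem unique_prime_partition :
    ∃! I : Set ℕ, (∀ q ∈ I, Nat.Prime q) ∧
      {p : ℕ | p.Prime} = I ∪ indexedSet I ∧ I ∩ indexedSet I = ∅ := by
  refine ⟨{q | inI q}, ⟨?_, ?_, ?_⟩, ?_⟩
  · exact fun q hq => ((inI_iff q).1 hq).1
  · ext q
    simp only [Set.mem_setOf_eq, Set.mem_union, indexedSet, Set.mem_setOf_eq]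
    constructor
    · intro hq
      by_cases h : inI q
      · exact Or.inl h
      · right
        rw [inI_iff] at h
        push_neg at h
        obtain ⟨n, hn, hIn, heq⟩ := h hq
        exact ⟨n, hIn, heq⟩
    · rintro (h | ⟨n, _, rfl⟩)
      · exact ((inI_iff q).1 h).1
      · exact nthPrime_prime n
  · ext q
    simp only [Set.mem_inter_iff, Set.mem_setOf_eq, indexedSet, Set.mem_empty_iff_false,
      iff_false, not_and]
    rintro hq ⟨n, hn, rfl⟩
    have hnp : n.Prime := ((inI_iff n).1 hn).1
    have hlt : n < nthPrime n := lt_nthPrime n hnp.one_lt.le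
    exact ((inI_iff (nthPrime n)).1 hq).2 n hlt hn rfl
  · intro J ⟨hJp, hJu, hJd⟩
    have key : ∀ q, q ∈ J ↔ inI q := by
      intro q
      induction q using Nat.strong_induction_on with
      | _ q ih =>
        constructor
        · intro hq
          rw [inI_iff]
          refine ⟨hJp q hq, fun n hn hIn heq => ?_⟩
          have hnJ : n ∈ J := (ih n hn).2 hIn
          have : q ∈ J ∩ indexedSet J := ⟨hq, n, hnJ, heq⟩
          rw [hJd] at this
          exact this
        · intro hq
          have hqp : q.Prime := ((inI_iff q).1 hq).1
          have : q ∈ J ∪ indexedSet J := hJu ▸ hqp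
          rcases this with h | ⟨n, hnJ, rfl⟩
          · exact h
          · exfalso
            have hnp : n.Prime := hJp n hnJ
            have hlt : n < nthPrime n := lt_nthPrime n hnp.one_lt.le
            have hIn : inI n := (ih n hlt).1 hnJ
            exact ((inI_iff (nthPrime n)).1 hq).2 n hlt hIn rfl
    ext q
    exact (key q).trans (Set.mem_setOf_eq ▸ Iff.rfl)
end

section
/- For every i ≥ 1, the higher-order prime set P^(i) decomposes as P^(i) = 𝔓^(i) ∪ {p_n : n ∈ 𝔓^(i)}, with 𝔓^(i) ∩ {p_n : n ∈ 𝔓^(i)} = ∅; equivalently, 𝔓^(i) = P^(i) \ 𝔓^(i+1). -/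
/-- The alternating-sum set `𝔓^(i) = ⋃_{j≥0} (P^(i+2j) \ P^(i+2j+1))`. -/
def altSet (i : ℕ) : Set ℕ := ⋃ j : ℕ, (P (i + 2 * j) \ P (i + 2 * j + 1))

lemma inf_prime : {p : ℕ | p.Prime}.Infinite := Nat.infinite_setOf_prime

lemma nth_prime_ge (m : ℕ) : m + 2 ≤ Nat.nth Nat.Prime m := by
  induction m with
  | zero => exact (Nat.nth_mem_of_infinite inf_prime 0).two_le
  | succ m ih =>
      have h : Nat.nth Nat.Prime m < Nat.nth Nat.Prime (m+1) :=
        (Nat.nth_lt_nth (p := Nat.Prime) inf_prime).2 (Nat.lt_succ_self m)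
      omega

lemma nthPrime_ge {n : ℕ} (hn : 1 ≤ n) : n + 1 ≤ nthPrime n := by
  have := nth_prime_ge (n - 1)
  unfold nthPrime; omega

lemma nthPrime_inj {n n' : ℕ} (hn : 1 ≤ n) (hn' : 1 ≤ n') (h : nthPrime n = nthPrime n') :
    n = n' := by
  have := Nat.nth_injective inf_prime h
  omega

lemma mem_P_ge : ∀ k, ∀ x ∈ P k, k + 1 ≤ x := by
  intro k
  induction k with
  | zero => intro x hx; exact absurd hx (Set.notMem_empty x)
  | succ k ih =>
      match k, ih with
      | 0, _ => intro x hx; exact hx.two_le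
      | (k+1), ih =>
          rintro x ⟨n, hn, rfl⟩
          have h1 := ih n hn
          have := nthPrime_ge (by omega : 1 ≤ n)
          omega

lemma P_succ_eq (k : ℕ) (hk : 1 ≤ k) : P (k + 1) = indexedSet (P k) := by
  match k, hk with
  | (j+1), _ => rfl

lemma P_succ_subset : ∀ k, 1 ≤ k → P (k + 1) ⊆ P k := by
  intro k hk
  match k, hk with
  | 1, _ =>
      rintro x ⟨n, hn, rfl⟩
      exact Nat.nth_mem_of_infinite inf_prime _
  | (k+2), _ =>
      rintro x ⟨n, hn, rfl⟩
      exact ⟨n, P_succ_subset (k+1) (by omega) hn, rfl⟩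

lemma P_subset {k l : ℕ} (hk : 1 ≤ k) (hkl : k ≤ l) : P l ⊆ P k := by
  induction l with
  | zero => omega
  | succ l ih =>
      rcases Nat.eq_or_lt_of_le hkl with h | h
      · subst h; exact subset_rfl
      · exact (P_succ_subset l (by omega)).trans (ih (by omega))

lemma mem_P_succ {k x : ℕ} (hk : 1 ≤ k) : x ∈ P (k + 1) ↔ x ∈ indexedSet (P k) := by
  rw [P_succ_eq k hk]

lemma indexed_diff (k : ℕ) (hk : 1 ≤ k) :
    indexedSet (P k \ P (k + 1)) = P (k + 1) \ P (k + 2) := by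
  ext x
  constructor
  · rintro ⟨n, ⟨hn1, hn2⟩, rfl⟩
    have hge := mem_P_ge k n hn1
    refine ⟨(mem_P_succ hk).2 ⟨n, hn1, rfl⟩, ?_⟩
    intro hx
    obtain ⟨n', hn', heq⟩ := (mem_P_succ (k := k+1) (by omega)).1 hx
    have hge' := mem_P_ge (k+1) n' hn'
    have := nthPrime_inj (by omega) (by omega) heq
    exact hn2 (this ▸ hn')
  · rintro ⟨hx1, hx2⟩
    obtain ⟨n, hn, rfl⟩ := (mem_P_succ hk).1 hx1
    exact ⟨n, ⟨hn, fun h => hx2 ((mem_P_succ (k := k+1) (by omega)).2 ⟨n, h, rfl⟩)⟩, rfl⟩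

lemma altSet_succ (i : ℕ) (hi : 1 ≤ i) : altSet (i + 1) = indexedSet (altSet i) := by
  ext x
  simp only [altSet, Set.mem_iUnion, indexedSet, Set.mem_setOf_eq]
  constructor
  · rintro ⟨j, hj⟩
    have : P (i + 1 + 2 * j) \ P (i + 1 + 2 * j + 1)
        = P ((i + 2*j) + 1) \ P ((i + 2*j) + 2) := by ring_nf
    rw [this, ← indexed_diff (i + 2*j) (by omega)] at hj
    obtain ⟨n, hn, rfl⟩ := hj
    exact ⟨n, ⟨j, hn⟩, rfl⟩
  · rintro ⟨n, ⟨j, hn⟩, rfl⟩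
    refine ⟨j, ?_⟩
    have : P (i + 1 + 2 * j) \ P (i + 1 + 2 * j + 1)
        = P ((i + 2*j) + 1) \ P ((i + 2*j) + 2) := by ring_nf
    rw [this, ← indexed_diff (i + 2*j) (by omega)]
    exact ⟨n, hn, rfl⟩

lemma altSet_subset_P (i : ℕ) (hi : 1 ≤ i) : altSet i ⊆ P i := by
  rintro x hx
  obtain ⟨j, hj1, _⟩ := Set.mem_iUnion.1 hx
  exact P_subset hi (by omega) hj1

lemma altSet_step_subset (k : ℕ) : altSet (k + 2) ⊆ altSet k := by
  intro x hx
  obtain ⟨j, hj⟩ := Set.mem_iUnion.1 hx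
  refine Set.mem_iUnion.2 ⟨j + 1, ?_⟩
  have h1 : k + 2 * (j + 1) = k + 2 + 2 * j := by ring
  rw [h1]; exact hj

lemma cover_aux : ∀ d k x, 1 ≤ k → x ∈ P k → x ∉ P (k + d) →
    x ∈ altSet k ∪ altSet (k + 1) := by
  intro d
  induction d with
  | zero => intro k x _ h1 h2; exact absurd h1 h2
  | succ d ih =>
      intro k x hk h1 h2
      by_cases h : x ∈ P (k + 1)
      · have h2' : x ∉ P (k + 1 + d) := by rwa [show k+1+d = k+(d+1) by ring]
        rcases ih (k+1) x (by omega) h h2' with h' | h'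
        · exact Or.inr h'
        · exact Or.inl (altSet_step_subset k h')
      · exact Or.inl (Set.mem_iUnion.2 ⟨0, by simpa using ⟨h1, h⟩⟩)

lemma P_eq_union (i : ℕ) (hi : 1 ≤ i) : P i = altSet i ∪ altSet (i + 1) := by
  apply Set.Subset.antisymm
  · intro x hx
    have hge := mem_P_ge i x hx
    have hnot : x ∉ P (i + (x - i)) := by
      intro h
      have := mem_P_ge (i + (x - i)) x h
      omega
    exact cover_aux (x - i) i x hi hx hnot
  · exact Set.union_subset (altSet_subset_P i hi)
      ((altSet_subset_P (i+1) (by omega)).trans (P_succ_subset i hi))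

lemma alt_disjoint (i : ℕ) (hi : 1 ≤ i) : altSet i ∩ altSet (i + 1) = ∅ := by
  ext x
  simp only [Set.mem_inter_iff, Set.mem_empty_iff_false, iff_false, not_and]
  intro h1 h2
  obtain ⟨j, hj1, hj2⟩ := Set.mem_iUnion.1 h1
  obtain ⟨l, hl1, hl2⟩ := Set.mem_iUnion.1 h2
  by_cases hjl : j ≤ l
  · exact hj2 (P_subset (by omega) (by omega) hl1)
  · exact hl2 (P_subset (by omega) (by omega) hj1)


/-- For every `i ≥ 1`, `P^(i) = 𝔓^(i) ∪ {p_n : n ∈ 𝔓^(i)}` with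
`𝔓^(i) ∩ {p_n : n ∈ 𝔓^(i)} = ∅`; equivalently, `𝔓^(i) = P^(i) \ 𝔓^(i+1)`. -/
theorem higher_order_primes_decomposition (i : ℕ) (hi : 1 ≤ i) :
    (P i = altSet i ∪ indexedSet (altSet i) ∧ altSet i ∩ indexedSet (altSet i) = ∅) ∧
      altSet i = P i \ altSet (i + 1) := by
  have hs := altSet_succ i hi
  have hu := P_eq_union i hi
  have hd := alt_disjoint i hi
  refine ⟨⟨by rw [← hs]; exact hu, by rw [← hs]; exact hd⟩, ?_⟩
  apply Set.Subset.antisymm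
  · intro x hx
    refine ⟨altSet_subset_P i hi hx, fun h => ?_⟩
    have : x ∈ altSet i ∩ altSet (i+1) := ⟨hx, h⟩
    rw [hd] at this; exact this
  · intro x hx
    rcases hu ▸ hx.1 with h | h
    · exact h
    · exact absurd h hx.2
end
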